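/- arXiv:2002.07281 — 3 statements merged into one kernel-verified Lean document; each statement's English description precedes it below -/
import Mathlib

section
/- Let p be a Borel probability measure on ℝ^r, let W be an r × d real matrix, and let x, x' ∈ ℝ^d. Let ω be a random vector in ℝ^r with distribution p and let b be a random variable uniformly distributed on [0, 2π], independent of ω. Define φ_ω(x) = √2 · cos(⟪ω, W x⟫ + b). Then E[ φ_ω(x) · φ_ω(x') ] = ∫_{ℝ^r} cos(⟪ω, W(x − x')⟫) dp(ω). -/
open MeasureTheory ProbabilityTheory Real
open scoped RealInnerProductSpace

-- inner integral lemma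
lemma inner_cos_integral (c : ℝ) :
    ∫ t, Real.cos (c + 2 * t)
      ∂((ENNReal.ofReal (2 * π))⁻¹ • volume.restrict (Set.Icc (0 : ℝ) (2 * π))) = 0 := by
  have hπ : (0:ℝ) < 2 * π := by positivity
  rw [integral_smul_measure]
  have h1 : ∫ t in Set.Icc (0:ℝ) (2*π), Real.cos (c + 2 * t)
      = ∫ t in (0:ℝ)..(2*π), Real.cos (c + 2 * t) := by
    rw [intervalIntegral.integral_of_le hπ.le, MeasureTheory.integral_Icc_eq_integral_Ioc]
  have h2 : ∫ t in (0:ℝ)..(2*π), Real.cos (c + 2 * t) = 0 := by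
    have e : ∀ t : ℝ, c + 2 * t = 2 * t + c := fun t => by ring
    simp only [e]
    rw [intervalIntegral.integral_comp_mul_add Real.cos (two_ne_zero) c]
    rw [integral_cos]
    rw [show 2*(2*π) + c = c + (2:ℤ)*(2*π) by push_cast; ring, Real.sin_add_int_mul_two_pi c 2]
    simp
  rw [h1, h2]
  simp

lemma trig_key (X Y : ℝ) :
    (Real.sqrt 2 * Real.cos X) * (Real.sqrt 2 * Real.cos Y)
      = Real.cos (X - Y) + Real.cos (X + Y) := by
  have h2 : Real.sqrt 2 * Real.sqrt 2 = 2 := Real.mul_self_sqrt (by norm_num)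
  have e : (Real.sqrt 2 * Real.cos X) * (Real.sqrt 2 * Real.cos Y)
      = (Real.sqrt 2 * Real.sqrt 2) * (Real.cos X * Real.cos Y) := by ring
  rw [e, h2, Real.cos_sub, Real.cos_add]; ring

/-- **Proposition 1 (score function via Fourier kernel embedding).**
If `ω ~ p` (a Borel probability measure on `ℝ^r`) and `b ~ Uniform[0, 2π]` are independent,
and `φ_ω(x) = √2 · cos(⟪ω, W x⟫ + b)`, then
`E[φ_ω(x) · φ_ω(x')] = ∫ cos(⟪ω, W (x - x')⟫) dp(ω)`. -/
theorem fourier_feature_unbiased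
    {r d : ℕ} (p : Measure (EuclideanSpace ℝ (Fin r))) [IsProbabilityMeasure p]
    (W : Matrix (Fin r) (Fin d) ℝ) (x x' : EuclideanSpace ℝ (Fin d))
    {Ω : Type*} [MeasurableSpace Ω] (P : Measure Ω) [IsProbabilityMeasure P]
    (w : Ω → EuclideanSpace ℝ (Fin r)) (b : Ω → ℝ)
    (hw : Measurable w) (hb : Measurable b)
    (hwd : Measure.map w P = p)
    (hbd : Measure.map b P
      = (ENNReal.ofReal (2 * π))⁻¹ • volume.restrict (Set.Icc (0 : ℝ) (2 * π)))
    (hind : IndepFun w b P) :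
    ∫ ξ, (Real.sqrt 2 * Real.cos (⟪w ξ, Matrix.toEuclideanLin W x⟫ + b ξ)) *
          (Real.sqrt 2 * Real.cos (⟪w ξ, Matrix.toEuclideanLin W x'⟫ + b ξ)) ∂P
      = ∫ ω, Real.cos ⟪ω, Matrix.toEuclideanLin W (x - x')⟫ ∂p := by
  set L := Matrix.toEuclideanLin W
  set μb : Measure ℝ := (ENNReal.ofReal (2 * π))⁻¹ • volume.restrict (Set.Icc (0 : ℝ) (2 * π))
    with hμb
  -- pointwise rewrite
  have hpt : ∀ ξ, (Real.sqrt 2 * Real.cos (⟪w ξ, L x⟫ + b ξ)) *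
          (Real.sqrt 2 * Real.cos (⟪w ξ, L x'⟫ + b ξ))
      = Real.cos ⟪w ξ, L (x - x')⟫
        + Real.cos ((⟪w ξ, L x⟫ + ⟪w ξ, L x'⟫) + 2 * b ξ) := by
    intro ξ
    rw [trig_key]
    congr 1
    · rw [map_sub, inner_sub_right]; ring_nf
    · ring_nf
  simp only [hpt]
  -- measurability helpers
  have hcw : ∀ y : EuclideanSpace ℝ (Fin d),
      Measurable fun ξ => ⟪w ξ, L y⟫ := fun y =>
    ((continuous_id.inner (continuous_const : Continuous fun _ : EuclideanSpace ℝ (Fin r) => L y)).measurable).comp hw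
  -- integrability of both pieces
  have hmf : Measurable fun ξ => Real.cos ⟪w ξ, L (x - x')⟫ :=
    Real.measurable_cos.comp (hcw _)
  have hmg : Measurable fun ξ =>
      Real.cos ((⟪w ξ, L x⟫ + ⟪w ξ, L x'⟫) + 2 * b ξ) :=
    Real.measurable_cos.comp (((hcw x).add (hcw x')).add (hb.const_mul 2))
  have hif : Integrable (fun ξ => Real.cos ⟪w ξ, L (x - x')⟫) P := by
    refine (integrable_const (1:ℝ)).mono' hmf.aestronglyMeasurable ?_
    filter_upwards with ξ using by simpa using Real.abs_cos_le_one _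
  have hig : Integrable (fun ξ =>
      Real.cos ((⟪w ξ, L x⟫ + ⟪w ξ, L x'⟫) + 2 * b ξ)) P := by
    refine (integrable_const (1:ℝ)).mono' hmg.aestronglyMeasurable ?_
    filter_upwards with ξ using by simpa using Real.abs_cos_le_one _
  rw [integral_add hif hig]
  -- first integral
  have e1 : ∫ ξ, Real.cos ⟪w ξ, L (x - x')⟫ ∂P
      = ∫ ω, Real.cos ⟪ω, L (x - x')⟫ ∂p := by
    rw [← hwd, integral_map hw.aemeasurable]
    exact (Real.measurable_cos.comp
      ((continuous_id.inner (continuous_const : Continuous fun _ :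
        EuclideanSpace ℝ (Fin r) => L (x - x'))).measurable)).aestronglyMeasurable
  -- second integral is zero
  haveI : IsProbabilityMeasure μb := by
    rw [← hbd]; exact Measure.isProbabilityMeasure_map hb.aemeasurable
  have hF : Measurable fun q : (EuclideanSpace ℝ (Fin r)) × ℝ =>
      Real.cos ((⟪q.1, L x⟫ + ⟪q.1, L x'⟫) + 2 * q.2) := by
    apply Real.measurable_cos.comp
    apply Measurable.add
    · exact ((continuous_fst.inner continuous_const).add
        (continuous_fst.inner continuous_const)).measurable
    · exact measurable_snd.const_mul 2
  have hmap : Measure.map (fun ξ => (w ξ, b ξ)) P = p.prod μb := by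
    rw [(indepFun_iff_map_prod_eq_prod_map_map hw.aemeasurable hb.aemeasurable).1 hind,
      hwd, hbd]
  have e2 : ∫ ξ, Real.cos ((⟪w ξ, L x⟫ + ⟪w ξ, L x'⟫) + 2 * b ξ) ∂P = 0 := by
    have : ∫ ξ, Real.cos ((⟪w ξ, L x⟫ + ⟪w ξ, L x'⟫) + 2 * b ξ) ∂P
        = ∫ q, Real.cos ((⟪q.1, L x⟫ + ⟪q.1, L x'⟫) + 2 * q.2)
            ∂(Measure.map (fun ξ => (w ξ, b ξ)) P) := by
      rw [integral_map (hw.prodMk hb).aemeasurable hF.aestronglyMeasurable]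
    rw [this, hmap]
    have hint : Integrable (fun q : (EuclideanSpace ℝ (Fin r)) × ℝ =>
        Real.cos ((⟪q.1, L x⟫ + ⟪q.1, L x'⟫) + 2 * q.2)) (p.prod μb) := by
      refine (integrable_const (1:ℝ)).mono' hF.aestronglyMeasurable ?_
      filter_upwards with q using by simpa using Real.abs_cos_le_one _
    rw [MeasureTheory.integral_prod _ hint]
    simp only [hμb, inner_cos_integral, integral_zero]
  rw [e1, e2, add_zero]
end

section
/- Let p be a Borel probability measure on ℝ^d with finite second moment σ_p² = ∫ ‖ω‖² dp(ω) < ∞, and let κ(δ) = ∫_{ℝ^d} cos(⟪ω, δ⟫) dp(ω). Let X ⊆ ℝ^d be a compact set contained in the closed Euclidean ball of radius R centered at the origin, let ω_1, …, ω_D be i.i.d. random vectors with distribution p, and let s(δ) = (1/D) Σ_{j=1}^D cos(⟪ω_j, δ⟫). Fix 0 < r ≤ 2R and ε > 0, and let C be any finite set of B points in ℝ^d such that every point of the closed ball of radius 2R lies within Euclidean distance r of some point of C. Then P( sup_{x, x' ∈ X} | s(x − x') − κ(x − x') | ≥ ε ) ≤ 2 B exp(− D ε² / 8) + (4 r σ_p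 / ε)². -/
open MeasureTheory ProbabilityTheory Real
open scoped RealInnerProductSpace NNReal

/-!
Write `g_ξ = s_ξ - κ`. Since `|cos a - cos b| ≤ |a - b|`, the function `g_ξ` is Lipschitz with
constant `L_ξ = (1/D) ∑ⱼ ‖ωⱼ‖ + σ_p` (using `∫ ‖ω‖ dp ≤ σ_p`). Every difference `x - x'` of points
of `X` lies in the ball of radius `2R`, hence within `r` of a point of `C`, so
`sup |g_ξ| ≥ ε` forces `|g_ξ c| ≥ ε/2` for some `c ∈ C` or `L_ξ ≥ ε/(2r)`. By Hoeffding's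
inequality each of the `B` events of the first kind has probability at most `2 exp(-Dε²/8)`;
since `E[L_ξ²] ≤ 4σ_p²`, Markov's inequality for `L_ξ²` bounds the last event by `(4rσ_p/ε)²`.
-/

section Concentration

variable {Ω : Type*} [MeasurableSpace Ω] {μ : Measure Ω}

lemma measureReal_abs_sum_ge_le_of_iIndepFun {ι : Type*} {X : ι → Ω → ℝ}
    (h_indep : iIndepFun X μ) {c : ι → ℝ≥0} {s : Finset ι}
    (h_subG : ∀ i ∈ s, HasSubgaussianMGF (X i) (c i) μ) {ε : ℝ} (hε : 0 ≤ ε) :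
    μ.real {ω | ε ≤ |∑ i ∈ s, X i ω|} ≤ 2 * exp (-ε ^ 2 / (2 * ∑ i ∈ s, c i)) := by
  have := h_indep.isProbabilityMeasure
  have hsplit : {ω | ε ≤ |∑ i ∈ s, X i ω|}
      ⊆ {ω | ε ≤ ∑ i ∈ s, X i ω} ∪ {ω | ε ≤ ∑ i ∈ s, (-X i) ω} := by
    intro ω (hω : ε ≤ |_|)
    rcases le_abs.1 hω with h | h
    · exact Or.inl h
    · exact Or.inr (by simpa [Finset.sum_neg_distrib] using h)
  calc _ ≤ μ.real ({ω | ε ≤ ∑ i ∈ s, X i ω} ∪ {ω | ε ≤ ∑ i ∈ s, (-X i) ω}) :=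
        measureReal_mono hsplit
    _ ≤ _ := measureReal_union_le _ _
    _ ≤ _ := by
      rw [two_mul]
      gcongr
      · exact HasSubgaussianMGF.measure_sum_ge_le_of_iIndepFun h_indep h_subG hε
      · exact HasSubgaussianMGF.measure_sum_ge_le_of_iIndepFun
          (h_indep.comp (fun _ x => -x) fun _ => measurable_neg) (fun i hi => (h_subG i hi).neg) hε

lemma measureReal_abs_avg_sub_ge_le_of_iIndepFun {D : ℕ} {Y : Fin D → Ω → ℝ}
    (h_indep : iIndepFun Y μ) (hmeas : ∀ j, Measurable (Y j)) (hY : ∀ j ω, |Y j ω| ≤ 1)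
    {m : ℝ} (hm : ∀ j, μ[Y j] = m) {t : ℝ} (ht : 0 ≤ t) :
    μ.real {ω | t ≤ |(1 / (D : ℝ)) * ∑ j, Y j ω - m|} ≤ 2 * exp (-(D * t ^ 2) / 2) := by
  have := h_indep.isProbabilityMeasure
  have h_subG : ∀ j ∈ Finset.univ, HasSubgaussianMGF (fun ω => Y j ω - m) 1 μ := by
    intro j _
    have := hasSubgaussianMGF_of_mem_Icc (μ := μ) (a := -1) (b := 1) (hmeas j).aemeasurable
      (.of_forall fun ω => abs_le.1 (hY j ω))
    rw [hm j] at this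
    convert this
    norm_num
  rcases Nat.eq_zero_or_pos D with rfl | hD
  · simpa using (measureReal_le_one (μ := μ)).trans one_le_two
  have hsub : {ω | t ≤ |(1 / (D : ℝ)) * ∑ j, Y j ω - m|}
      = {ω | D * t ≤ |∑ j, (Y j ω - m)|} := by
    ext ω
    have hD' : (0 : ℝ) < D := by exact_mod_cast hD
    simp only [Set.mem_ofPred_eq, Finset.sum_sub_distrib, Finset.sum_const, Finset.card_univ,
      Fintype.card_fin, nsmul_eq_mul]
    rw [show (1 / (D : ℝ)) * ∑ j, Y j ω - m = (∑ j, Y j ω - D * m) / D by field_simp,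
      abs_div, abs_of_pos hD', le_div_iff₀ hD', mul_comm]
  rw [hsub]
  refine (measureReal_abs_sum_ge_le_of_iIndepFun
    (h_indep.comp (fun _ x => x - m) fun _ => measurable_sub_const m) h_subG
    (by positivity)).trans_eq ?_
  congr 2
  simp only [Finset.sum_const, Finset.card_univ, Fintype.card_fin, nsmul_eq_mul, mul_one,
    NNReal.coe_natCast]
  field_simp

lemma measureReal_ge_le_integral_sq_div [IsFiniteMeasure μ] {Z : Ω → ℝ}
    (hZ : Integrable (fun ω => Z ω ^ 2) μ) {a : ℝ} (ha : 0 < a) :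
    μ.real {ω | a ≤ Z ω} ≤ (∫ ω, Z ω ^ 2 ∂μ) / a ^ 2 := by
  rw [le_div_iff₀ (by positivity), mul_comm]
  calc a ^ 2 * μ.real {ω | a ≤ Z ω} ≤ a ^ 2 * μ.real {ω | a ^ 2 ≤ Z ω ^ 2} :=
        mul_le_mul_of_nonneg_left (measureReal_mono fun ω (hω : a ≤ Z ω) =>
          show a ^ 2 ≤ Z ω ^ 2 from pow_le_pow_left₀ ha.le hω 2) (sq_nonneg a)
    _ ≤ ∫ ω, Z ω ^ 2 ∂μ :=
        mul_meas_ge_le_integral_of_nonneg (.of_forall fun ω => sq_nonneg _) hZ _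

lemma integral_le_of_integral_sq_le [IsProbabilityMeasure μ] {f : Ω → ℝ} (hf : MemLp f 2 μ)
    {σ : ℝ} (hσ : 0 ≤ σ) (h : ∫ ω, f ω ^ 2 ∂μ ≤ σ ^ 2) : ∫ ω, f ω ∂μ ≤ σ := by
  have hvar := variance_nonneg f μ
  rw [variance_eq_sub hf] at hvar
  exact (abs_le_of_sq_le_sq' (by simp only [Pi.pow_apply] at hvar; linarith) hσ).2

lemma integral_sq_avg_add_le [IsProbabilityMeasure μ] {D : ℕ} {Z : Fin D → Ω → ℝ}
    (hZ : ∀ j, MemLp (Z j) 2 μ) {σ : ℝ} (hσ : ∀ j, ∫ ω, Z j ω ^ 2 ∂μ = σ ^ 2) :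
    ∫ ω, ((1 / (D : ℝ)) * ∑ j, Z j ω + σ) ^ 2 ∂μ ≤ 4 * σ ^ 2 := by
  have hint : ∀ j, Integrable (fun ω => Z j ω ^ 2) μ := fun j => (hZ j).integrable_sq
  have hbound : ∀ ω, ((1 / (D : ℝ)) * ∑ j, Z j ω + σ) ^ 2
      ≤ 2 * ((1 / (D : ℝ)) * ∑ j, Z j ω ^ 2) + 2 * σ ^ 2 := by
    intro ω
    have hcs : ((1 / (D : ℝ)) * ∑ j, Z j ω) ^ 2 ≤ (1 / (D : ℝ)) * ∑ j, Z j ω ^ 2 := by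
      simpa [one_div, inv_mul_eq_div] using
        sum_div_card_sq_le_sum_sq_div_card (s := Finset.univ) (f := fun j => Z j ω)
    nlinarith [sq_nonneg ((1 / (D : ℝ)) * ∑ j, Z j ω - σ)]
  have havg : ∫ ω, (1 / (D : ℝ)) * ∑ j, Z j ω ^ 2 ∂μ ≤ σ ^ 2 := by
    rw [integral_const_mul, integral_finsetSum _ fun j _ => hint j]
    simp only [hσ, Finset.sum_const, Finset.card_univ, Fintype.card_fin, nsmul_eq_mul]
    rcases eq_or_ne (D : ℝ) 0 with hD | hD <;> simp [hD, sq_nonneg]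
  have hint_avg : Integrable (fun ω => (1 / (D : ℝ)) * ∑ j, Z j ω ^ 2) μ :=
    (integrable_finsetSum _ fun j _ => hint j).const_mul _
  calc _ ≤ ∫ ω, (2 * ((1 / (D : ℝ)) * ∑ j, Z j ω ^ 2) + 2 * σ ^ 2) ∂μ := by
        refine integral_mono ?_ ((hint_avg.const_mul 2).add (integrable_const _)) hbound
        exact (((memLp_finsetSum _ fun j _ => hZ j).const_mul _).add (memLp_const σ)).integrable_sq
    _ ≤ 4 * σ ^ 2 := by
        rw [integral_add (hint_avg.const_mul 2) (integrable_const _), integral_const_mul]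
        simp only [integral_const, probReal_univ, smul_eq_mul, one_mul]
        linarith

end Concentration

lemma measureReal_avg_norm_add_ge_le {E Ω : Type*} [NormedAddCommGroup E] [MeasurableSpace E]
    [OpensMeasurableSpace E] [MeasurableSpace Ω] {P : Measure Ω} [IsProbabilityMeasure P]
    {p : Measure E} {D : ℕ} {w : Fin D → Ω → E} (hw : ∀ j, Measurable (w j))
    (hdist : ∀ j, P.map (w j) = p) (hp : MemLp (fun ω => ‖ω‖) 2 p) {σ : ℝ}
    (hσ : ∫ ω, ‖ω‖ ^ 2 ∂p = σ ^ 2) {a : ℝ} (ha : 0 < a) :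
    P.real {ξ | a ≤ (1 / (D : ℝ)) * ∑ j, ‖w j ξ‖ + σ} ≤ 4 * σ ^ 2 / a ^ 2 := by
  have hZ : ∀ j, MemLp (fun ξ => ‖w j ξ‖) 2 P := fun j =>
    (hdist j ▸ hp).comp_of_map (hw j).aemeasurable
  have hZσ : ∀ j, ∫ ξ, ‖w j ξ‖ ^ 2 ∂P = σ ^ 2 := fun j => by
    rw [← hσ, ← hdist j, integral_map (hw j).aemeasurable (by fun_prop)]
  have hL2 : MemLp (fun ξ => (1 / (D : ℝ)) * ∑ j, ‖w j ξ‖ + σ) 2 P :=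
    ((memLp_finsetSum _ fun j _ => hZ j).const_mul _).add (memLp_const σ)
  exact (measureReal_ge_le_integral_sq_div hL2.integrable_sq ha).trans
    (by gcongr; exact integral_sq_avg_add_le hZ hZσ)

section Net

variable {E : Type*} [SeminormedAddCommGroup E]

lemma iSup_abs_sub_le_of_net {g : E → ℝ} {L M r R : ℝ} {X : Set E} {C : Finset E}
    (hL : 0 ≤ L) (hlip : ∀ x y, |g x - g y| ≤ L * ‖x - y‖) (hM0 : 0 ≤ M)
    (hM : ∀ c ∈ C, |g c| ≤ M) (hr : 0 ≤ r) (hXR : X ⊆ Metric.closedBall 0 R)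
    (hcover : ∀ δ, ‖δ‖ ≤ 2 * R → ∃ c ∈ C, ‖δ - c‖ ≤ r) :
    ⨆ (x : X) (x' : X), |g ((x : E) - x')| ≤ M + L * r := by
  refine Real.iSup_le (fun x => Real.iSup_le (fun x' => ?_) (by positivity)) (by positivity)
  have hx := mem_closedBall_zero_iff.1 (hXR x.2)
  have hx' := mem_closedBall_zero_iff.1 (hXR x'.2)
  obtain ⟨c, hc, hδc⟩ := hcover ((x : E) - x') ((norm_sub_le _ _).trans (by linarith))
  have hgc := (hlip ((x : E) - x') c).trans (mul_le_mul_of_nonneg_left hδc hL)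
  linarith [abs_sub_abs_le_abs_sub (g ((x : E) - x')) (g c), hM c hc]

lemma exists_half_le_abs_or_le_of_le_iSup_of_net {g : E → ℝ} {L r R ε : ℝ} {X : Set E}
    {C : Finset E} (hL : 0 ≤ L) (hlip : ∀ x y, |g x - g y| ≤ L * ‖x - y‖) (hC : C.Nonempty)
    (hr : 0 < r) (hXR : X ⊆ Metric.closedBall 0 R)
    (hcover : ∀ δ, ‖δ‖ ≤ 2 * R → ∃ c ∈ C, ‖δ - c‖ ≤ r)
    (hε : ε ≤ ⨆ (x : X) (x' : X), |g ((x : E) - x')|) :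
    (∃ c ∈ C, ε / 2 ≤ |g c|) ∨ ε / (2 * r) ≤ L := by
  by_contra! h
  obtain ⟨c₀, hc₀⟩ := hC
  have hM0 : 0 ≤ C.sup' ⟨c₀, hc₀⟩ (|g ·|) := (abs_nonneg _).trans (C.le_sup' (|g ·|) hc₀)
  have hMε : C.sup' ⟨c₀, hc₀⟩ (|g ·|) < ε / 2 := (Finset.sup'_lt_iff _).2 h.1
  have hLr : L * r < ε / 2 := by rw [← lt_div_iff₀ hr, div_div]; exact h.2
  linarith [iSup_abs_sub_le_of_net hL hlip hM0 (fun c hc => C.le_sup' (|g ·|) hc) hr.le hXR hcover]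

end Net

section CosineFeatures

variable {E : Type*} [NormedAddCommGroup E] [InnerProductSpace ℝ E]

lemma abs_cos_inner_sub_cos_inner_le (ω δ c : E) :
    |cos ⟪ω, δ⟫ - cos ⟪ω, c⟫| ≤ ‖ω‖ * ‖δ - c‖ :=
  calc |cos ⟪ω, δ⟫ - cos ⟪ω, c⟫| ≤ |⟪ω, δ⟫ - ⟪ω, c⟫| := abs_cos_sub_cos_le _ _
    _ = |⟪ω, δ - c⟫| := by rw [inner_sub_right]
    _ ≤ ‖ω‖ * ‖δ - c‖ := abs_real_inner_le_norm _ _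

lemma abs_avg_cos_inner_sub_avg_cos_inner_le {D : ℕ} (ω : Fin D → E) (δ c : E) :
    |(1 / (D : ℝ)) * ∑ j, cos ⟪ω j, δ⟫ - (1 / (D : ℝ)) * ∑ j, cos ⟪ω j, c⟫|
      ≤ ((1 / (D : ℝ)) * ∑ j, ‖ω j‖) * ‖δ - c‖ := by
  rw [← mul_sub, ← Finset.sum_sub_distrib, abs_mul, abs_of_nonneg (by positivity), mul_assoc,
    Finset.sum_mul]
  gcongr
  exact (Finset.abs_sum_le_sum_abs _ _).trans
    (Finset.sum_le_sum fun j _ => abs_cos_inner_sub_cos_inner_le _ _ _)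

variable [MeasurableSpace E] [OpensMeasurableSpace E]

lemma integrable_cos_inner (p : Measure E) [IsFiniteMeasure p] (δ : E) :
    Integrable (fun ω => cos ⟪ω, δ⟫) p :=
  .of_bound (by fun_prop) 1 (.of_forall fun ω => by simpa using abs_cos_le_one _)

lemma abs_integral_cos_inner_sub_integral_cos_inner_le {p : Measure E} [IsFiniteMeasure p]
    (hp : Integrable (fun ω => ‖ω‖) p) (δ c : E) :
    |∫ ω, cos ⟪ω, δ⟫ ∂p - ∫ ω, cos ⟪ω, c⟫ ∂p| ≤ (∫ ω, ‖ω‖ ∂p) * ‖δ - c‖ := by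
  rw [← integral_sub (integrable_cos_inner p δ) (integrable_cos_inner p c), ← integral_mul_const]
  refine (abs_integral_le_integral_abs).trans (integral_mono ?_ (hp.mul_const _)
    fun ω => abs_cos_inner_sub_cos_inner_le ω δ c)
  exact ((integrable_cos_inner p δ).sub (integrable_cos_inner p c)).abs

lemma abs_integral_cos_inner_sub_integral_cos_inner_le_of_integral_sq_le {p : Measure E}
    [IsProbabilityMeasure p] (hp : MemLp (fun ω => ‖ω‖) 2 p) {σ : ℝ} (hσ : 0 ≤ σ)
    (h : ∫ ω, ‖ω‖ ^ 2 ∂p ≤ σ ^ 2) (δ c : E) :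
    |∫ ω, cos ⟪ω, δ⟫ ∂p - ∫ ω, cos ⟪ω, c⟫ ∂p| ≤ σ * ‖δ - c‖ :=
  (abs_integral_cos_inner_sub_integral_cos_inner_le (hp.integrable one_le_two) δ c).trans
    (by gcongr; exact integral_le_of_integral_sq_le hp hσ h)

variable {Ω : Type*} [MeasurableSpace Ω] {P : Measure Ω} {p : Measure E} {D : ℕ}
  {w : Fin D → Ω → E}

lemma measureReal_abs_avg_cos_inner_sub_integral_ge_le (hw : ∀ j, Measurable (w j))
    (hindep : iIndepFun w P) (hdist : ∀ j, P.map (w j) = p) (c : E) {t : ℝ} (ht : 0 ≤ t) :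
    P.real {ξ | t ≤ |(1 / (D : ℝ)) * ∑ j, cos ⟪w j ξ, c⟫ - ∫ ω, cos ⟪ω, c⟫ ∂p|}
      ≤ 2 * exp (-(D * t ^ 2) / 2) := by
  have hcos : Measurable fun ω : E => cos ⟪ω, c⟫ := by fun_prop
  refine measureReal_abs_avg_sub_ge_le_of_iIndepFun
    (hindep.comp (fun _ ω => cos ⟪ω, c⟫) fun _ => hcos) (fun j => hcos.comp (hw j))
    (fun j ξ => abs_cos_le_one _) (fun j => ?_) ht
  rw [← hdist j, integral_map (hw j).aemeasurable hcos.aestronglyMeasurable]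
  rfl

end CosineFeatures

theorem rff_uniform_convergence_net_general
    {d : ℕ} (p : Measure (EuclideanSpace ℝ (Fin d))) [IsProbabilityMeasure p]
    (σp : ℝ) (hσp0 : 0 ≤ σp)
    (hmom : Integrable (fun ω : EuclideanSpace ℝ (Fin d) => ‖ω‖ ^ 2) p)
    (hσp : σp ^ 2 = ∫ ω, ‖ω‖ ^ 2 ∂p)
    (κ : EuclideanSpace ℝ (Fin d) → ℝ)
    (hκ : ∀ δ, κ δ = ∫ ω, Real.cos ⟪ω, δ⟫ ∂p)
    (X : Set (EuclideanSpace ℝ (Fin d)))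
    (R : ℝ) (hXR : X ⊆ Metric.closedBall 0 R)
    {Ω : Type*} [MeasurableSpace Ω] (P : Measure Ω) [IsProbabilityMeasure P]
    (D : ℕ) (w : Fin D → Ω → EuclideanSpace ℝ (Fin d))
    (hw : ∀ j, Measurable (w j))
    (hindep : iIndepFun w P)
    (hdist : ∀ j, Measure.map (w j) P = p)
    (s : Ω → EuclideanSpace ℝ (Fin d) → ℝ)
    (hs : ∀ ξ δ, s ξ δ = (1 / (D : ℝ)) * ∑ j, Real.cos ⟪w j ξ, δ⟫)
    (r ε : ℝ) (hr0 : 0 < r) (hr2R : r ≤ 2 * R) (hε : 0 < ε)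
    (B : ℕ) (C : Finset (EuclideanSpace ℝ (Fin d))) (hB : C.card = B)
    (hcover : ∀ δ : EuclideanSpace ℝ (Fin d),
      ‖δ‖ ≤ 2 * R → ∃ c ∈ C, ‖δ - c‖ ≤ r) :
    P {ξ | ε ≤ ⨆ (x : X) (x' : X),
        |s ξ ((x : EuclideanSpace ℝ (Fin d)) - (x' : EuclideanSpace ℝ (Fin d)))
          - κ ((x : EuclideanSpace ℝ (Fin d)) - (x' : EuclideanSpace ℝ (Fin d)))|}
      ≤ ENNReal.ofReal
          (2 * B * Real.exp (-(D * ε ^ 2) / 8) + (4 * r * σp / ε) ^ 2) := by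
  obtain ⟨c₀, hc₀, -⟩ := hcover 0 (by simpa using hr0.le.trans hr2R)
  have hnorm : MemLp (fun ω : EuclideanSpace ℝ (Fin d) => ‖ω‖) 2 p :=
    (memLp_two_iff_integrable_sq measurable_norm.aestronglyMeasurable).2 hmom
  set L : Ω → ℝ := fun ξ => (1 / (D : ℝ)) * ∑ j, ‖w j ξ‖ + σp with hL
  have hlip : ∀ ξ δ c, |(s ξ δ - κ δ) - (s ξ c - κ c)| ≤ L ξ * ‖δ - c‖ := by
    intro ξ δ c
    rw [sub_sub_sub_comm, hL, add_mul]
    refine (abs_sub _ _).trans (add_le_add ?_ ?_)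
    · simpa only [hs] using abs_avg_cos_inner_sub_avg_cos_inner_le (fun j => w j ξ) δ c
    · simpa only [hκ] using
        abs_integral_cos_inner_sub_integral_cos_inner_le_of_integral_sq_le hnorm hσp0 hσp.ge δ c
  have hnet : ∀ c, P.real {ξ | ε / 2 ≤ |s ξ c - κ c|} ≤ 2 * exp (-(D * ε ^ 2) / 8) := by
    intro c
    simp_rw [hs, hκ]
    refine (measureReal_abs_avg_cos_inner_sub_integral_ge_le hw hindep hdist c
      (by positivity)).trans_eq ?_
    ring_nf
  have htail : P.real {ξ | ε / (2 * r) ≤ L ξ} ≤ (4 * r * σp / ε) ^ 2 :=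
    (measureReal_avg_norm_add_ge_le hw hdist hnorm hσp.symm (by positivity)).trans_eq
      (by field_simp; ring)
  rw [← ofReal_measureReal]
  refine ENNReal.ofReal_le_ofReal ?_
  calc _ ≤ P.real ((⋃ c ∈ C, {ξ | ε / 2 ≤ |s ξ c - κ c|}) ∪ {ξ | ε / (2 * r) ≤ L ξ}) :=
        measureReal_mono fun ξ hξ => by
          simpa using exists_half_le_abs_or_le_of_le_iSup_of_net (g := fun δ => s ξ δ - κ δ)
            (by positivity) (hlip ξ) ⟨c₀, hc₀⟩ hr0 hXR hcover hξ
    _ ≤ ∑ c ∈ C, P.real {ξ | ε / 2 ≤ |s ξ c - κ c|} + P.real {ξ | ε / (2 * r) ≤ L ξ} :=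
        (measureReal_union_le _ _).trans (by gcongr; exact measureReal_biUnion_finset_le _ _)
    _ ≤ ∑ _c ∈ C, 2 * exp (-(D * ε ^ 2) / 8) + (4 * r * σp / ε) ^ 2 := by
        gcongr with c; exact hnet c
    _ = _ := by rw [Finset.sum_const, hB, nsmul_eq_mul]; ring

/-- **Lemma 1 (covering-number uniform convergence of random Fourier features).**
With `κ(δ) = ∫ cos⟪ω, δ⟫ dp(ω)`, `s(δ) = (1/D) ∑ⱼ cos⟪ωⱼ, δ⟫` for i.i.d. `ωⱼ ~ p`,
`X` compact contained in the ball of radius `R`, any `0 < r ≤ 2R`, `ε > 0`, and any `r`-net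
`C` of cardinality `B` for the ball of radius `2R`:
`P(sup_{x,x' ∈ X} |s(x-x') - κ(x-x')| ≥ ε) ≤ 2 B exp(-Dε²/8) + (4 r σ_p / ε)²`. -/
theorem rff_uniform_convergence_net
    {d : ℕ} (p : Measure (EuclideanSpace ℝ (Fin d))) [IsProbabilityMeasure p]
    (σp : ℝ) (hσp0 : 0 ≤ σp)
    (hmom : Integrable (fun ω : EuclideanSpace ℝ (Fin d) => ‖ω‖ ^ 2) p)
    (hσp : σp ^ 2 = ∫ ω, ‖ω‖ ^ 2 ∂p)
    (κ : EuclideanSpace ℝ (Fin d) → ℝ)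
    (hκ : ∀ δ, κ δ = ∫ ω, Real.cos ⟪ω, δ⟫ ∂p)
    (X : Set (EuclideanSpace ℝ (Fin d))) (hX : IsCompact X)
    (R : ℝ) (hXR : X ⊆ Metric.closedBall 0 R)
    {Ω : Type*} [MeasurableSpace Ω] (P : Measure Ω) [IsProbabilityMeasure P]
    (D : ℕ) (w : Fin D → Ω → EuclideanSpace ℝ (Fin d))
    (hw : ∀ j, Measurable (w j))
    (hindep : iIndepFun w P)
    (hdist : ∀ j, Measure.map (w j) P = p)
    (s : Ω → EuclideanSpace ℝ (Fin d) → ℝ)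
    (hs : ∀ ξ δ, s ξ δ = (1 / (D : ℝ)) * ∑ j, Real.cos ⟪w j ξ, δ⟫)
    (r ε : ℝ) (hr0 : 0 < r) (hr2R : r ≤ 2 * R) (hε : 0 < ε)
    (B : ℕ) (C : Finset (EuclideanSpace ℝ (Fin d))) (hB : C.card = B)
    (hcover : ∀ δ : EuclideanSpace ℝ (Fin d),
      ‖δ‖ ≤ 2 * R → ∃ c ∈ C, ‖δ - c‖ ≤ r) :
    P {ξ | ε ≤ ⨆ (x : X) (x' : X),
        |s ξ ((x : EuclideanSpace ℝ (Fin d)) - (x' : EuclideanSpace ℝ (Fin d)))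
          - κ ((x : EuclideanSpace ℝ (Fin d)) - (x' : EuclideanSpace ℝ (Fin d)))|}
      ≤ ENNReal.ofReal
          (2 * B * Real.exp (-(D * ε ^ 2) / 8) + (4 * r * σp / ε) ^ 2) :=
  rff_uniform_convergence_net_general p σp hσp0 hmom hσp κ hκ X R hXR P D w hw hindep hdist s hs r ε
    hr0 hr2R hε B C hB hcover
end

section
/- Let p be a Borel probability measure on ℝ^d with finite second moment σ_p² = ∫ ‖ω‖² dp(ω) < ∞, let κ(δ) = ∫_{ℝ^d} cos(⟪ω, δ⟫) dp(ω), let ω_1, …, ω_D be i.i.d. random vectors with distribution p, and let S(δ) = (1/D) Σ_{j=1}^D cos(⟪ω_j, δ⟫) − κ(δ). Let Δ ⊆ ℝ^d be a nonempty compact set and define the random variable L = sup_{δ ∈ Δ} ‖∇S(δ)‖, where ∇ denotes the gradient with respect to δ. Then E[ L² ] ≤ 4 σ_p². -/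
open MeasureTheory ProbabilityTheory Real
open scoped RealInnerProductSpace

/-!
Since `|sin| ≤ 1`, the norms of `(1/D) ∑ⱼ ωⱼ sin ⟪ωⱼ, δ⟫` and `∫ ω sin ⟪ω, δ⟫ dp(ω)` are
bounded by `(1/D) ∑ⱼ ‖ωⱼ‖` and `∫ ‖ω‖ dp` uniformly in `δ`, so `L` is bounded by their sum.
Then `(a + b)² ≤ 2a² + 2b²` and Jensen's inequality for both averages give
`L² ≤ 2 (1/D) ∑ⱼ ‖ωⱼ‖² + 2 ∫ ‖ω‖² dp`, whose expectation is at most `4 σ_p²`.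
-/

theorem sq_integral_le_integral_sq {α : Type*} [MeasurableSpace α] {μ : Measure α}
    [IsProbabilityMeasure μ] {f : α → ℝ} (hf : MemLp f 2 μ) :
    (∫ x, f x ∂μ) ^ 2 ≤ ∫ x, f x ^ 2 ∂μ := by
  have hvar := variance_nonneg f μ
  rw [variance_eq_sub hf] at hvar
  simpa [Pi.pow_apply] using hvar

section CosInner

variable {E : Type*} [NormedAddCommGroup E] [InnerProductSpace ℝ E]

theorem hasFDerivAt_cos_inner (ω δ : E) :
    HasFDerivAt (fun x => cos ⟪ω, x⟫) (-sin ⟪ω, δ⟫ • innerSL ℝ ω) δ :=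
  (hasDerivAt_cos _).comp_hasFDerivAt δ (innerSL ℝ ω).hasFDerivAt

theorem norm_sin_smul_innerSL_le (ω δ : E) :
    ‖-sin ⟪ω, δ⟫ • innerSL ℝ ω‖ ≤ ‖ω‖ := by
  rw [norm_smul, innerSL_apply_norm, norm_neg]
  exact mul_le_of_le_one_left (norm_nonneg ω) (abs_sin_le_one _)

variable [MeasurableSpace E] [BorelSpace E] [SecondCountableTopology E]
  {μ : Measure E} [IsFiniteMeasure μ]

theorem hasFDerivAt_integral_cos_inner (hμ : Integrable (‖·‖) μ) (δ : E) :
    HasFDerivAt (fun x => ∫ ω, cos ⟪ω, x⟫ ∂μ) (∫ ω, -sin ⟪ω, δ⟫ • innerSL ℝ ω ∂μ) δ := by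
  have hcos_meas (x : E) : AEStronglyMeasurable (fun ω : E => cos ⟪ω, x⟫) μ :=
    (continuous_cos.comp (continuous_id.inner continuous_const)).aestronglyMeasurable
  refine hasFDerivAt_integral_of_dominated_of_fderiv_le (bound := (‖·‖)) Filter.univ_mem
    (.of_forall hcos_meas) ?_ ?_ (ae_of_all _ fun ω x _ => norm_sin_smul_innerSL_le ω x) hμ
    (ae_of_all _ fun ω x _ => hasFDerivAt_cos_inner ω x)
  · exact (integrable_const 1).mono' (hcos_meas δ) (ae_of_all _ fun ω => abs_cos_le_one _)
  · have : SecondCountableTopologyEither E (E →L[ℝ] ℝ) :=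
      secondCountableTopologyEither_of_left _ _
    exact ((continuous_sin.comp (continuous_id.inner continuous_const)).neg.smul
      (innerSL ℝ).continuous).aestronglyMeasurable

theorem norm_fderiv_smul_sum_cos_inner_sub_integral_le {ι : Type*} [Fintype ι]
    (hμ : Integrable (‖·‖) μ) (c : ℝ) (ω : ι → E) (δ : E) :
    ‖fderiv ℝ (fun x => c * ∑ j, cos ⟪ω j, x⟫ - ∫ η, cos ⟪η, x⟫ ∂μ) δ‖
      ≤ |c| * ∑ j, ‖ω j‖ + ∫ η, ‖η‖ ∂μ := by
  have hderiv := ((HasFDerivAt.fun_sum (u := Finset.univ) fun j _ =>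
    hasFDerivAt_cos_inner (ω j) δ).const_mul c).fun_sub (hasFDerivAt_integral_cos_inner hμ δ)
  rw [hderiv.fderiv]
  refine (norm_sub_le _ _).trans (add_le_add ?_ ?_)
  · rw [norm_smul, Real.norm_eq_abs]
    exact mul_le_mul_of_nonneg_left ((norm_sum_le _ _).trans
      (Finset.sum_le_sum fun j _ => norm_sin_smul_innerSL_le (ω j) δ)) (abs_nonneg c)
  · exact norm_integral_le_of_norm_le hμ (ae_of_all _ fun η => norm_sin_smul_innerSL_le η δ)

end CosInner

theorem norm_gradient_eq_norm_fderiv {F : Type*} [NormedAddCommGroup F] [InnerProductSpace ℝ F]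
    [CompleteSpace F] (f : F → ℝ) (x : F) : ‖gradient f x‖ = ‖fderiv ℝ f x‖ :=
  (InnerProductSpace.toDual ℝ F).symm.norm_map _

theorem sq_le_two_mul_mean_sq_add {ι : Type*} [Fintype ι] {a : ι → ℝ} {x m s : ℝ}
    (hx₀ : 0 ≤ x) (hx : x ≤ (∑ j, a j) / Fintype.card ι + m) (hm : m ^ 2 ≤ s) :
    x ^ 2 ≤ 2 * ((∑ j, a j ^ 2) / Fintype.card ι + s) := by
  have hmean := sum_div_card_sq_le_sum_sq_div_card (s := Finset.univ) (f := a)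
  rw [Finset.card_univ] at hmean
  calc x ^ 2 ≤ ((∑ j, a j) / Fintype.card ι + m) ^ 2 := pow_le_pow_left₀ hx₀ hx 2
    _ ≤ 2 * (((∑ j, a j) / Fintype.card ι) ^ 2 + m ^ 2) := add_sq_le
    _ ≤ 2 * ((∑ j, a j ^ 2) / Fintype.card ι + s) := by gcongr

section MapEq

variable {α Ω : Type*} [MeasurableSpace α] [MeasurableSpace Ω] {P : Measure Ω} {p : Measure α}
  [NeZero p] {X : Ω → α} {f : α → ℝ}

theorem aemeasurable_of_map_eq (hX : P.map X = p) : AEMeasurable X P :=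
  .of_map_ne_zero (hX ▸ NeZero.ne p)

theorem integrable_comp_of_map_eq (hX : P.map X = p) (hf : Integrable f p) :
    Integrable (fun ξ => f (X ξ)) P :=
  (hX ▸ hf).comp_aemeasurable (aemeasurable_of_map_eq hX)

theorem integral_comp_of_map_eq (hX : P.map X = p) (hf : AEStronglyMeasurable f p) :
    ∫ ξ, f (X ξ) ∂P = ∫ x, f x ∂p := by
  rw [← integral_map (aemeasurable_of_map_eq hX) (hX ▸ hf), hX]

end MapEq

theorem rff_lipschitz_second_moment_general
    {d : ℕ} (p : Measure (EuclideanSpace ℝ (Fin d))) [IsProbabilityMeasure p]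
    (σp : ℝ)
    (hmom : Integrable (fun ω : EuclideanSpace ℝ (Fin d) => ‖ω‖ ^ 2) p)
    (hσp : σp ^ 2 = ∫ ω, ‖ω‖ ^ 2 ∂p)
    (κ : EuclideanSpace ℝ (Fin d) → ℝ)
    (hκ : ∀ δ, κ δ = ∫ ω, Real.cos ⟪ω, δ⟫ ∂p)
    {Ω : Type*} [MeasurableSpace Ω] (P : Measure Ω) [IsProbabilityMeasure P]
    (D : ℕ) (w : Fin D → Ω → EuclideanSpace ℝ (Fin d))
    (hdist : ∀ j, Measure.map (w j) P = p)
    (S : Ω → EuclideanSpace ℝ (Fin d) → ℝ)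
    (hS : ∀ ξ δ, S ξ δ = (1 / (D : ℝ)) * ∑ j, Real.cos ⟪w j ξ, δ⟫ - κ δ)
    (Δ : Set (EuclideanSpace ℝ (Fin d)))
    (L : Ω → ℝ)
    (hL : ∀ ξ, L ξ = ⨆ δ : Δ, ‖gradient (S ξ) (δ : EuclideanSpace ℝ (Fin d))‖) :
    ∫ ξ, (L ξ) ^ 2 ∂P ≤ 4 * σp ^ 2 := by
  have hnorm : MemLp (‖·‖) 2 p :=
    (memLp_two_iff_integrable_sq continuous_norm.aestronglyMeasurable).2 hmom
  set m := ∫ ω, ‖ω‖ ∂p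
  have hL_le (ξ : Ω) : L ξ ≤ (∑ j, ‖w j ξ‖) / D + m := by
    have hSξ : S ξ = fun x => 1 / (D : ℝ) * ∑ j, cos ⟪w j ξ, x⟫ - ∫ ω, cos ⟪ω, x⟫ ∂p := by
      ext x; rw [hS, hκ]
    rw [hL]
    refine Real.iSup_le (fun δ => ?_) (by positivity)
    rw [norm_gradient_eq_norm_fderiv, hSξ]
    simpa [div_eq_inv_mul] using norm_fderiv_smul_sum_cos_inner_sub_integral_le
      (hnorm.integrable one_le_two) (1 / (D : ℝ)) (fun j => w j ξ) δ
  have hL_sq (ξ : Ω) : L ξ ^ 2 ≤ 2 * ((∑ j, ‖w j ξ‖ ^ 2) / D + σp ^ 2) := by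
    simpa using sq_le_two_mul_mean_sq_add (a := fun j => ‖w j ξ‖)
      (hL ξ ▸ Real.iSup_nonneg fun _ => norm_nonneg _) (by simpa using hL_le ξ)
      (hσp ▸ sq_integral_le_integral_sq hnorm)
  have hsample_int (j : Fin D) : Integrable (fun ξ => ‖w j ξ‖ ^ 2) P :=
    integrable_comp_of_map_eq (hdist j) hmom
  have hsum_int : Integrable (fun ξ => ∑ j, ‖w j ξ‖ ^ 2) P :=
    integrable_finsetSum _ fun j _ => hsample_int j
  calc ∫ ξ, L ξ ^ 2 ∂P ≤ ∫ ξ, 2 * ((∑ j, ‖w j ξ‖ ^ 2) / D + σp ^ 2) ∂P :=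
        integral_mono_of_nonneg (ae_of_all _ fun ξ => sq_nonneg _)
          (((hsum_int.div_const _).add (integrable_const _)).const_mul _) (ae_of_all _ hL_sq)
    _ = 2 * (D * σp ^ 2 / D + σp ^ 2) := by
        rw [integral_const_mul, integral_add (hsum_int.div_const _) (integrable_const _),
          integral_div, integral_finsetSum _ fun j _ => hsample_int j]
        simp [integral_comp_of_map_eq (hdist _) hmom.aestronglyMeasurable, hσp]
    _ ≤ 4 * σp ^ 2 := by
        rcases eq_or_ne (D : ℝ) 0 with hD | hD <;> simp [hD] <;> nlinarith [sq_nonneg σp]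

/-- **Second-moment bound on the Lipschitz constant (proof of Lemma 1).**
With `S(δ) = (1/D) ∑ⱼ cos⟪ωⱼ, δ⟫ - κ(δ)` and `L = sup_{δ ∈ Δ} ‖∇S(δ)‖` over a nonempty
compact set `Δ`, one has `E[L²] ≤ 4 σ_p²`. -/
theorem rff_lipschitz_second_moment
    {d : ℕ} (p : Measure (EuclideanSpace ℝ (Fin d))) [IsProbabilityMeasure p]
    (σp : ℝ) (hσp0 : 0 ≤ σp)
    (hmom : Integrable (fun ω : EuclideanSpace ℝ (Fin d) => ‖ω‖ ^ 2) p)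
    (hσp : σp ^ 2 = ∫ ω, ‖ω‖ ^ 2 ∂p)
    (κ : EuclideanSpace ℝ (Fin d) → ℝ)
    (hκ : ∀ δ, κ δ = ∫ ω, Real.cos ⟪ω, δ⟫ ∂p)
    {Ω : Type*} [MeasurableSpace Ω] (P : Measure Ω) [IsProbabilityMeasure P]
    (D : ℕ) (w : Fin D → Ω → EuclideanSpace ℝ (Fin d))
    (hw : ∀ j, Measurable (w j))
    (hindep : iIndepFun w P)
    (hdist : ∀ j, Measure.map (w j) P = p)
    (S : Ω → EuclideanSpace ℝ (Fin d) → ℝ)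
    (hS : ∀ ξ δ, S ξ δ = (1 / (D : ℝ)) * ∑ j, Real.cos ⟪w j ξ, δ⟫ - κ δ)
    (Δ : Set (EuclideanSpace ℝ (Fin d))) (hΔc : IsCompact Δ) (hΔne : Δ.Nonempty)
    (L : Ω → ℝ)
    (hL : ∀ ξ, L ξ = ⨆ δ : Δ, ‖gradient (S ξ) (δ : EuclideanSpace ℝ (Fin d))‖) :
    ∫ ξ, (L ξ) ^ 2 ∂P ≤ 4 * σp ^ 2 :=
  rff_lipschitz_second_moment_general p σp hmom hσp κ hκ P D w hdist S hS Δ L hL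
end
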